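/- arXiv:1910.07785 — 4 statements merged into one kernel-verified Lean document; each statement's English description precedes it below -/
import Mathlib

section
/- Let W be a Coxeter group with length function ℓ, and let W_K be a standard parabolic subgroup (generated by a subset K of the simple reflections). For w in W, let w^K denote the unique minimal-length element of the coset wW_K, and let {}_Kw^K denote the unique maximal-length element of the set {(vw)^K : v ∈ W_K}. Dually, let {}^Kw denote the unique minimal-length element of W_Kw, and {}^Kw_K the unique maximal-length element of {{}^K(wv) : v ∈ W_K}. Then ℓ({}_Kw^K) = ℓ({}^Kw_K). -/
/-!
Let `u₀` be a longest element of the finite group `W_K`. An element `v w u` of the double coset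
`W_K w W_K` equals `(v v'⁻¹) m` with `m = v' w u = {}^K(w u)`, so its length is at most
`ℓ(u₀) + ℓ({}^K w_K)`. The element `u₀ · {}^K w_K` of the double coset attains this bound, because
lengths add across a minimal coset representative: `ℓ(x b) = ℓ(x) + ℓ(b)` for `x ∈ W_K` and `b`
minimal in `W_K b`. Inversion turns `{}_K w^K` into `{}^K(w⁻¹)_K` and the double coset of `w`
into that of `w⁻¹` without changing lengths, so `ℓ(u₀) + ℓ({}_K w^K)` is the same maximum.

Additivity rests on the strong exchange condition: a left inversion of `π ω` occurs in the left
inversion sequence of `ω`. It is proved with Tits' sign cocycle, the first coordinate of the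
homomorphism `W → (W → ℤˣ) ⋊ W` sending `s i` to `(δ_{s i}, s i)`, where `δ_t` is `-1` at `t`
and `1` elsewhere: the cocycle of `π ω` is the product of the `δ_t` over the left inversion
sequence of `ω`, and it takes the value `-1` at every left inversion.
-/

namespace Statement0

open CoxeterSystem

variable {B : Type*} {W : Type*} [Group W] {M : CoxeterMatrix B}

/-- `m` is a minimal-length element of the right coset `w * W_K`. -/
def IsMinRight (cs : CoxeterSystem M W) (WK : Subgroup W) (w m : W) : Prop :=
  (∃ v ∈ WK, m = w * v) ∧ ∀ v ∈ WK, cs.length m ≤ cs.length (w * v)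

/-- `m` is a minimal-length element of the left coset `W_K * w`. -/
def IsMinLeft (cs : CoxeterSystem M W) (WK : Subgroup W) (w m : W) : Prop :=
  (∃ v ∈ WK, m = v * w) ∧ ∀ v ∈ WK, cs.length m ≤ cs.length (v * w)

/-- `a` is a maximal-length element of the set `{(v*w)^K : v ∈ W_K}` of right-minimal
representatives of the left `W_K`-translates of `w`; this is the element `{}_K w^K`. -/
def IsMaxOfMinRights (cs : CoxeterSystem M W) (WK : Subgroup W) (w a : W) : Prop :=
  (∃ v ∈ WK, IsMinRight cs WK (v * w) a) ∧
    ∀ v ∈ WK, ∀ m, IsMinRight cs WK (v * w) m → cs.length m ≤ cs.length a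

/-- `a` is a maximal-length element of the set `{{}^K(w*v) : v ∈ W_K}`; this is the
element `{}^K w_K`. -/
def IsMaxOfMinLefts (cs : CoxeterSystem M W) (WK : Subgroup W) (w a : W) : Prop :=
  (∃ v ∈ WK, IsMinLeft cs WK (w * v) a) ∧
    ∀ v ∈ WK, ∀ m, IsMinLeft cs WK (w * v) m → cs.length m ≤ cs.length a

end Statement0

namespace SemidirectProduct

variable {N G : Type*} [CommGroup N] [Group G] {φ : G →* MulAut N}

theorem mk_pow (n : N) (g : G) (k : ℕ) :
    (⟨n, g⟩ : N ⋊[φ] G) ^ k = ⟨∏ r ∈ Finset.range k, φ (g ^ r) n, g ^ k⟩ := by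
  induction k with
  | zero => ext <;> simp
  | succ k ih => rw [pow_succ, ih, Finset.prod_range_succ, pow_succ]; rfl

end SemidirectProduct

namespace CoxeterSystem

variable {B W : Type*} [Group W] {M : CoxeterMatrix B} (cs : CoxeterSystem M W)

theorem leftInvSeq_append (ω ω' : List B) :
    cs.leftInvSeq (ω ++ ω') =
      cs.leftInvSeq ω ++ (cs.leftInvSeq ω').map (MulAut.conj (cs.wordProd ω)) := by
  induction ω with
  | nil => simp
  | cons i ω ih => simp [leftInvSeq, ih, List.map_map, wordProd_cons]

def conjArrow : W →* MulAut (W → ℤˣ) :=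
  mulAutArrow.comp ConjAct.toConjAct.toMonoidHom

theorem conjArrow_apply (w : W) (f : W → ℤˣ) (x : W) : conjArrow w f x = f (w⁻¹ * x * w) := by
  show f ((ConjAct.toConjAct w)⁻¹ • x) = _
  simp [ConjAct.smul_def]

open scoped Classical

theorem conjArrow_mulSingle (w t : W) (ε : ℤˣ) :
    conjArrow w (Pi.mulSingle t ε) = Pi.mulSingle (w * t * w⁻¹) ε := by
  funext x
  simp only [conjArrow_apply, Pi.mulSingle_apply]
  exact if_congr ⟨fun h => by rw [← h]; group, fun h => by rw [h]; group⟩ rfl rfl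

noncomputable def simpleLift (i : B) : (W → ℤˣ) ⋊[conjArrow] W :=
  ⟨Pi.mulSingle (cs.simple i) (-1), cs.simple i⟩

theorem isLiftable_simpleLift : M.IsLiftable cs.simpleLift := by
  intro i j
  set c := cs.simple i * cs.simple j
  set e : ℕ → W → ℤˣ := fun r => Pi.mulSingle (c ^ r * cs.simple i) (-1)
  have hinv : ∀ r : ℕ, (c ^ r)⁻¹ = cs.simple i * c ^ r * cs.simple i := fun r => by
    have hc : c⁻¹ = cs.simple i * c * (cs.simple i)⁻¹ := by simp [c]
    rw [← inv_pow, hc, conj_pow, inv_simple]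
  have hconj : ∀ r k : ℕ, conjArrow (c ^ r) (e k) = e (k + 2 * r) := fun r k => by
    simp only [e, conjArrow_mulSingle, hinv]
    rw [show c ^ (k + 2 * r) = c ^ r * c ^ k * c ^ r by rw [← pow_add, ← pow_add]; ring_nf]
    simp [mul_assoc]
  have hmul : cs.simpleLift i * cs.simpleLift j = ⟨e 0 * e 1, c⟩ := by
    ext1
    · simp [simpleLift, e, SemidirectProduct.mul_left, conjArrow_mulSingle, c, mul_assoc]
    · rfl
  -- `(simpleLift i * simpleLift j) ^ M i j` has first coordinate `∏ r < 2 * M i j, e r`, in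
  -- which `c ^ M i j = 1` makes every factor occur twice.
  have hpairs : ∀ n : ℕ, ∏ r ∈ Finset.range n, conjArrow (c ^ r) (e 0 * e 1)
      = ∏ r ∈ Finset.range (2 * n), e r := fun n => by
    induction n with
    | zero => simp
    | succ n ih =>
      rw [Finset.prod_range_succ, ih, map_mul, hconj, hconj, mul_add, Finset.prod_range_succ,
        Finset.prod_range_succ, mul_assoc]
      simp only [zero_add, add_comm 1]
  have hc : c ^ M i j = 1 := cs.simple_mul_simple_pow i j
  have hperiod : ∀ r, e (M i j + r) = e r := fun r => by
    simp only [e, pow_add, hc, one_mul]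
  rw [hmul, SemidirectProduct.mk_pow, hc, hpairs, two_mul, Finset.prod_range_add]
  simp only [hperiod]
  ext1
  · funext x
    simp [Int.units_mul_self]
  · rfl

noncomputable def cocycleLift : W →* (W → ℤˣ) ⋊[conjArrow] W :=
  cs.lift ⟨cs.simpleLift, cs.isLiftable_simpleLift⟩

theorem cocycleLift_wordProd (ω : List B) :
    cs.cocycleLift (cs.wordProd ω) =
      ⟨((cs.leftInvSeq ω).map (Pi.mulSingle · (-1))).prod, cs.wordProd ω⟩ := by
  induction ω with
  | nil => rw [wordProd_nil, map_one]; rfl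
  | cons i ω ih =>
    rw [wordProd_cons, map_mul, ih, cocycleLift, lift_apply_simple]
    ext1
    · rw [SemidirectProduct.mul_left]
      simp only [simpleLift, leftInvSeq, List.map_cons, List.prod_cons, List.map_map,
        map_list_prod, Function.comp_def, conjArrow_mulSingle, MulAut.conj_apply]
    · rfl

noncomputable def reflectionCocycle (w : W) : W → ℤˣ := (cs.cocycleLift w).left

theorem reflectionCocycle_wordProd (ω : List B) :
    cs.reflectionCocycle (cs.wordProd ω) =
      ((cs.leftInvSeq ω).map (Pi.mulSingle · (-1))).prod := by
  rw [reflectionCocycle, cocycleLift_wordProd]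

theorem reflectionCocycle_simple (i : B) :
    cs.reflectionCocycle (cs.simple i) = Pi.mulSingle (cs.simple i) (-1) := by
  simpa using cs.reflectionCocycle_wordProd [i]

theorem right_cocycleLift (w : W) : (cs.cocycleLift w).right = w := by
  obtain ⟨ω, -, rfl⟩ := cs.exists_isReduced w
  rw [cocycleLift_wordProd]

theorem reflectionCocycle_mul (u v : W) :
    cs.reflectionCocycle (u * v) =
      cs.reflectionCocycle u * conjArrow u (cs.reflectionCocycle v) := by
  rw [reflectionCocycle, map_mul, SemidirectProduct.mul_left, right_cocycleLift]
  rfl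

theorem mem_leftInvSeq_of_reflectionCocycle_eq_neg_one {ω : List B} {t : W}
    (h : cs.reflectionCocycle (cs.wordProd ω) t = -1) : t ∈ cs.leftInvSeq ω := by
  by_contra ht
  rw [reflectionCocycle_wordProd, Pi.list_prod_apply, List.prod_eq_one] at h
  · exact absurd h (by decide)
  · simp only [List.map_map, List.mem_map, Function.comp_apply]
    rintro _ ⟨u, hu, rfl⟩
    exact Pi.mulSingle_eq_of_ne (by rintro rfl; exact ht hu) _

theorem reflectionCocycle_self {t : W} (ht : cs.IsReflection t) :
    cs.reflectionCocycle t t = -1 := by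
  obtain ⟨u, i, rfl⟩ := ht
  -- evaluate the cocycle of `t u = u s_i` at `t`
  have hcomm : u * cs.simple i * u⁻¹ * u = u * cs.simple i := by group
  have hconj : u⁻¹ * (u * cs.simple i * u⁻¹) * u = cs.simple i := by group
  generalize u * cs.simple i * u⁻¹ = t at hcomm hconj ⊢
  have key := congrArg (cs.reflectionCocycle · t) hcomm
  simp only [reflectionCocycle_mul, Pi.mul_apply, conjArrow_apply, reflectionCocycle_simple,
    inv_mul_cancel, one_mul, hconj, Pi.mulSingle_eq_same] at key
  exact mul_right_cancel (key.trans (mul_comm _ _))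

theorem reflectionCocycle_apply_of_isLeftInversion {w t : W} (ht : cs.IsLeftInversion w t) :
    cs.reflectionCocycle w t = -1 := by
  by_contra hne
  have hw : cs.reflectionCocycle w t = 1 := (Int.units_eq_one_or _).resolve_right hne
  obtain ⟨ω, hω, hω_eq⟩ := cs.exists_isReduced (t * w)
  have htw : cs.reflectionCocycle (cs.wordProd ω) t = -1 := by
    rw [← hω_eq, reflectionCocycle_mul, Pi.mul_apply, conjArrow_apply,
      reflectionCocycle_self _ ht.1]
    simp [ht.1.inv, ht.1.mul_self, hw]
  have hlt := (cs.isLeftInversion_of_mem_leftInvSeq hω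
    (cs.mem_leftInvSeq_of_reflectionCocycle_eq_neg_one htw)).2
  rw [← hω_eq, ← mul_assoc, ht.1.mul_self, one_mul] at hlt
  exact absurd ht.2 (not_lt.2 hlt.le)

theorem mem_leftInvSeq_of_isLeftInversion {ω : List B} {t : W}
    (ht : cs.IsLeftInversion (cs.wordProd ω) t) : t ∈ cs.leftInvSeq ω :=
  cs.mem_leftInvSeq_of_reflectionCocycle_eq_neg_one
    (cs.reflectionCocycle_apply_of_isLeftInversion ht)

abbrev parabolicSubgroup (K : Set B) : Subgroup W := Subgroup.closure (cs.simple '' K)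

end CoxeterSystem

namespace Statement0

open CoxeterSystem DoubleCoset
open scoped Pointwise

variable {B : Type*} {W : Type*} [Group W] {M : CoxeterMatrix B}

section Cosets

variable {cs : CoxeterSystem M W} {H : Subgroup W}

theorem exists_isMinLeft (hfin : (H : Set W).Finite) (z : W) : ∃ m, IsMinLeft cs H z m := by
  obtain ⟨v, hv, hmin⟩ := Set.exists_min_image _ (fun v => cs.length (v * z)) hfin ⟨1, H.one_mem⟩
  exact ⟨v * z, ⟨v, hv, rfl⟩, hmin⟩

theorem IsMinLeft.length_le_mul {z b v : W} (hb : IsMinLeft cs H z b) (hv : v ∈ H) :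
    cs.length b ≤ cs.length (v * b) := by
  obtain ⟨⟨u, hu, rfl⟩, hmin⟩ := hb
  simpa [mul_assoc] using hmin (v * u) (H.mul_mem hv hu)

theorem isMinLeft_inv_inv_iff {z m : W} :
    IsMinLeft cs H z⁻¹ m⁻¹ ↔ IsMinRight cs H z m := by
  have hlen : ∀ v, cs.length (v * z⁻¹) = cs.length (z * v⁻¹) := fun v => by
    rw [← cs.length_inv]; group
  simp only [IsMinLeft, IsMinRight, cs.length_inv, hlen]
  constructor
  · rintro ⟨⟨v, hv, hm⟩, hmin⟩
    refine ⟨⟨v⁻¹, H.inv_mem hv, by rw [← inv_inv m, hm]; group⟩, fun u hu => ?_⟩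
    simpa using hmin u⁻¹ (H.inv_mem hu)
  · rintro ⟨⟨v, hv, rfl⟩, hmin⟩
    exact ⟨⟨v⁻¹, H.inv_mem hv, by group⟩, fun u hu => hmin u⁻¹ (H.inv_mem hu)⟩

theorem IsMaxOfMinRights.inv {w a : W} (ha : IsMaxOfMinRights cs H w a) :
    IsMaxOfMinLefts cs H w⁻¹ a⁻¹ := by
  obtain ⟨⟨v, hv, hav⟩, hmax⟩ := ha
  refine ⟨⟨v⁻¹, H.inv_mem hv, ?_⟩, fun u hu m hm => ?_⟩
  · rwa [← mul_inv_rev, isMinLeft_inv_inv_iff]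
  · rw [← inv_inv m, ← inv_inv u, ← mul_inv_rev, isMinLeft_inv_inv_iff] at hm
    simpa using hmax u⁻¹ (H.inv_mem hu) m⁻¹ hm

end Cosets

section Lengths

variable (cs : CoxeterSystem M W)

theorem length_lt_length_simple_mul_mul {H : Subgroup W} {z b x : W} {i : B}
    (hb : IsMinLeft cs H z b) (hi : cs.simple i ∈ H) (hx : x ∈ H)
    (hlt : cs.length x < cs.length (cs.simple i * x)) :
    cs.length (x * b) < cs.length (cs.simple i * x * b) := by
  by_contra! hle
  obtain ⟨ω, hω, rfl⟩ := cs.exists_isReduced x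
  obtain ⟨ρ, hρ, rfl⟩ := cs.exists_isReduced b
  have hinv : cs.IsLeftInversion (cs.wordProd (ω ++ ρ)) (cs.simple i) := by
    refine ⟨cs.isReflection_simple i, ?_⟩
    rw [mul_assoc] at hle
    rw [wordProd_append]
    exact lt_of_le_of_ne hle (cs.length_simple_mul_ne _ i)
  have hmem := cs.mem_leftInvSeq_of_isLeftInversion hinv
  rw [leftInvSeq_append, List.mem_append] at hmem
  -- `s i` comes either from `x`, contradicting `hlt`, or from `b` conjugated by `x`,
  -- contradicting the minimality of `b` in `H b`
  rcases hmem with h | h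
  · exact absurd (cs.isLeftInversion_of_mem_leftInvSeq hω h).2 (not_lt.2 hlt.le)
  · obtain ⟨t, ht, hst⟩ := List.mem_map.1 h
    have htH : t ∈ H := by
      rw [show t = (cs.wordProd ω)⁻¹ * cs.simple i * cs.wordProd ω by
        rw [← hst, MulAut.conj_apply]; group]
      exact H.mul_mem (H.mul_mem (H.inv_mem hx) hi) hx
    exact absurd (cs.isLeftInversion_of_mem_leftInvSeq hρ ht).2
      (not_lt.2 (hb.length_le_mul htH))

theorem length_simple_mul_mul_of_isMinLeft {H : Subgroup W} {z b y : W} {i : B}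
    (hb : IsMinLeft cs H z b) (hi : cs.simple i ∈ H) (hy : y ∈ H)
    (hyb : cs.length (y * b) = cs.length y + cs.length b) :
    cs.length (cs.simple i * y * b) = cs.length (cs.simple i * y) + cs.length b := by
  have hup := cs.length_mul_le (cs.simple i * y) b
  have hdown := cs.length_mul_le (cs.simple i) (cs.simple i * y * b)
  rw [cs.length_simple, ← mul_assoc, ← mul_assoc, simple_mul_simple_self, one_mul] at hdown
  rcases cs.length_simple_mul y i with h | h
  · have := length_lt_length_simple_mul_mul cs hb hi hy (by omega)
    omega
  · omega

theorem length_mul_eq_of_isMinLeft {K : Set B} {z b x : W}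
    (hb : IsMinLeft cs (cs.parabolicSubgroup K) z b) (hx : x ∈ cs.parabolicSubgroup K) :
    cs.length (x * b) = cs.length x + cs.length b := by
  induction hx using Subgroup.closure_induction_left with
  | one => simp
  | mul_left _ hs y hy ih =>
    obtain ⟨i, hiK, rfl⟩ := hs
    exact length_simple_mul_mul_of_isMinLeft cs hb (Subgroup.subset_closure ⟨i, hiK, rfl⟩) hy ih
  | inv_mul_cancel _ hs y hy ih =>
    obtain ⟨i, hiK, rfl⟩ := hs
    rw [inv_simple]
    exact length_simple_mul_mul_of_isMinLeft cs hb (Subgroup.subset_closure ⟨i, hiK, rfl⟩) hy ih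

theorem length_le_of_mem_doubleCoset {H : Subgroup W} (hfin : (H : Set W).Finite)
    {w b u₀ z : W} (hb : IsMaxOfMinLefts cs H w b) (hmax : ∀ u ∈ H, cs.length u ≤ cs.length u₀)
    (hz : z ∈ doubleCoset w H H) : cs.length z ≤ cs.length u₀ + cs.length b := by
  obtain ⟨v, hv, u, hu, rfl⟩ := mem_doubleCoset.1 hz
  obtain ⟨m, hm⟩ := exists_isMinLeft hfin (w * u)
  obtain ⟨v', hv', hm_eq⟩ := hm.1
  calc cs.length (v * w * u) = cs.length (v * v'⁻¹ * m) := by rw [hm_eq]; group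
    _ ≤ cs.length (v * v'⁻¹) + cs.length m := cs.length_mul_le _ _
    _ ≤ cs.length u₀ + cs.length b :=
      add_le_add (hmax _ (H.mul_mem hv (H.inv_mem hv'))) (hb.2 u hu m hm)

theorem isGreatest_length_doubleCoset {K : Set B}
    (hfin : (cs.parabolicSubgroup K : Set W).Finite) {w b u₀ : W}
    (hb : IsMaxOfMinLefts cs (cs.parabolicSubgroup K) w b) (hu₀ : u₀ ∈ cs.parabolicSubgroup K)
    (hmax : ∀ u ∈ cs.parabolicSubgroup K, cs.length u ≤ cs.length u₀) :
    IsGreatest (cs.length '' doubleCoset w (cs.parabolicSubgroup K) (cs.parabolicSubgroup K))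
      (cs.length u₀ + cs.length b) := by
  obtain ⟨v, hv, hbv⟩ := hb.1
  refine ⟨⟨u₀ * b, ?_, length_mul_eq_of_isMinLeft cs hbv hu₀⟩, ?_⟩
  · obtain ⟨v', hv', rfl⟩ := hbv.1
    exact mem_doubleCoset.2 ⟨u₀ * v', mul_mem hu₀ hv', v, hv, by group⟩
  · rintro _ ⟨z, hz, rfl⟩
    exact length_le_of_mem_doubleCoset cs hfin hb hmax hz

theorem image_length_doubleCoset_inv (H : Subgroup W) (w : W) :
    cs.length '' doubleCoset w⁻¹ H H = cs.length '' doubleCoset w H H := by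
  have hinv : doubleCoset w⁻¹ (H : Set W) H = (doubleCoset w H H)⁻¹ := by
    simp only [doubleCoset, mul_inv_rev, Set.inv_singleton, inv_coe_set, mul_assoc]
  rw [hinv]
  exact Set.image_inv_of_apply_inv_eq fun x _ => cs.length_inv x

end Lengths

/-- For `w ∈ W`, `ℓ({}_K w^K) = ℓ({}^K w_K)`. -/
theorem length_maxMinRight_eq_length_maxMinLeft
    (cs : CoxeterSystem M W) (K : Set B)
    (WK : Subgroup W) (hWK : WK = Subgroup.closure (cs.simple '' K))
    (hfin : (WK : Set W).Finite)
    (w a b : W)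
    (ha : IsMaxOfMinRights cs WK w a) (hb : IsMaxOfMinLefts cs WK w b) :
    cs.length a = cs.length b := by
  subst hWK
  obtain ⟨u₀, hu₀, hmax⟩ := Set.exists_max_image _ cs.length hfin ⟨1, one_mem _⟩
  have hA := isGreatest_length_doubleCoset cs hfin ha.inv hu₀ hmax
  have hB := isGreatest_length_doubleCoset cs hfin hb hu₀ hmax
  rw [image_length_doubleCoset_inv, cs.length_inv] at hA
  exact Nat.add_left_cancel (hA.unique hB)

end Statement0
end

section
/- Let W̃ be an extended affine Weyl group with length function ℓ and a length-preserving automorphism σ of finite order. An element w ∈ W̃ is called σ-straight if ℓ(w σ(w) σ²(w) ⋯ σ^{m-1}(w)) = m·ℓ(w) for all m ≥ 1. Prove that if w is σ-straight, then for the Newton point ν(w) (the dominant W₀-conjugate of the average translation part), one has ℓ(w) = ⟨ν(w), 2ρ⟩, where ρ is the half sum of the positive roots. -/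
/-!
Statement 4: Let `W̃ = X_*(T)_{Γ₀} ⋊ W₀` be an extended affine Weyl group of a root
datum, with length function `ℓ` and a length-preserving automorphism `σ` of finite
order.  An element `w ∈ W̃` is `σ`-straight if
`ℓ(w σ(w) σ²(w) ⋯ σ^{m-1}(w)) = m·ℓ(w)` for all `m ≥ 1`.  If `w` is `σ`-straight then
`ℓ(w) = ⟨ν(w), 2ρ⟩`, where `ν(w)` is the Newton point of `w` (the dominant
`W₀`-conjugate of the average translation part `(1/n)(w σ(w) ⋯ σ^{n-1}(w))`) and `ρ`
is the half sum of the positive roots.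

We encode the root-datum data as: a translation lattice `X` with an action of the
finite Weyl group `W₀`, a finite set `Pos` of positive roots viewed as linear characters
`X →+ ℤ` on the cocharacter lattice (permuted by `W₀` up to sign, with
`Pos ∩ (−Pos) = ∅`), and the length function `ℓ` on `W̃` pinned down by the standard
Iwahori–Bernstein length formula
`ℓ(t^λ u) = Σ_{α>0, u⁻¹α>0} |⟨λ,α⟩| + Σ_{α>0, u⁻¹α<0} |⟨λ,α⟩ − 1|`.
The conclusion `ℓ(w) = ⟨ν(w), 2ρ⟩` is stated with denominators cleared:
`n · ℓ(w) = Σ_{α ∈ Pos} ⟨u·λ, α⟩` where `ν(w) = (1/n)·(u·λ)` is dominant.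
-/

namespace Statement4

open SemidirectProduct
open scoped Classical

/-- The twisted product `w · σ(w) · σ²(w) ⋯ σ^{m-1}(w)`. -/
def twistedProd {G : Type*} [Group G] (σ : MulAut G) (w : G) : ℕ → G
  | 0 => 1
  | n + 1 => twistedProd σ w n * (σ ^ n) w

variable {X : Type*} [AddCommGroup X] {W₀ : Type*} [Group W₀]

/-- The action of `W₀` on characters: `(u • α)(λ) = α(u⁻¹ • λ)`. -/
def act (ψ : W₀ →* Multiplicative (AddAut X)) (u : W₀) (α : X →+ ℤ) : X →+ ℤ :=
  α.comp (AddEquiv.toAddMonoidHom (Multiplicative.toAdd (ψ u⁻¹) : X ≃+ X))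

/-!
Straightness applied with `m = n` gives `ℓ(t^λ) = n·ℓ(w)`, since the twisted product of length
`n` is the translation `t^λ`. The length formula evaluates `ℓ(t^λ)` to `Σ_{α>0} |⟨λ, α⟩|`. This
sum is `W₀`-invariant, because `W₀` permutes the positive roots up to sign, so it equals
`Σ_{α>0} |⟨u·λ, α⟩|`, which is `Σ_{α>0} ⟨u·λ, α⟩ = ⟨u·λ, 2ρ⟩` as `u·λ` is dominant.
-/

section SignRep

variable {M : Type*} [InvolutiveNeg M] [DecidableEq M] (S : Finset M)

-- the representative of `{a, -a}` in `S`, when there is one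
def signRep (a : M) : M := if a ∈ S then a else -a

variable {S}

lemma signRep_mem {a : M} (h : a ∈ S ∨ -a ∈ S) : signRep S a ∈ S := by
  unfold signRep
  split_ifs with ha
  · exact ha
  · exact h.resolve_left ha

lemma signRep_eq_or_eq_neg (a : M) : signRep S a = a ∨ signRep S a = -a := by
  unfold signRep
  split_ifs
  exacts [Or.inl rfl, Or.inr rfl]

lemma signRep_of_mem {a : M} (ha : a ∈ S) : signRep S a = a := if_pos ha

lemma signRep_neg_of_mem {a : M} (ha : a ∈ S) (hS : ∀ b ∈ S, -b ∉ S) : signRep S (-a) = a := by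
  rw [signRep, if_neg (hS a ha), neg_neg]

lemma signRep_comp_signRep {g g' : M → M} (hg : ∀ a, g' (g a) = a)
    (hg' : ∀ a, g' (-a) = -g' a) (hS : ∀ b ∈ S, -b ∉ S) {a : M} (ha : a ∈ S) :
    signRep S (g' (signRep S (g a))) = a := by
  rcases signRep_eq_or_eq_neg (S := S) (g a) with h | h <;> rw [h]
  · rw [hg, signRep_of_mem ha]
  · rw [hg', hg, signRep_neg_of_mem ha hS]

-- `e` followed by `signRep S` permutes `S`
theorem sum_comp_equiv_of_mem_or_neg_mem {R : Type*} [AddCommMonoid R]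
    (hS : ∀ a ∈ S, -a ∉ S) (e : M ≃ M) (he : ∀ a, e (-a) = -e a)
    (he_mem : ∀ a ∈ S, e a ∈ S ∨ -e a ∈ S) (he_symm_mem : ∀ a ∈ S, e.symm a ∈ S ∨ -e.symm a ∈ S)
    (f : M → R) (hf : ∀ a, f (-a) = f a) :
    ∑ a ∈ S, f (e a) = ∑ a ∈ S, f a := by
  have he_symm : ∀ a, e.symm (-a) = -e.symm a := fun a => by
    rw [Equiv.symm_apply_eq, he, Equiv.apply_symm_apply]
  refine Finset.sum_nbij' (fun a => signRep S (e a)) (fun a => signRep S (e.symm a))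
    (fun a ha => signRep_mem (he_mem a ha)) (fun a ha => signRep_mem (he_symm_mem a ha))
    (fun a ha => signRep_comp_signRep e.symm_apply_apply he_symm hS ha)
    (fun a ha => signRep_comp_signRep e.apply_symm_apply he hS ha) fun a _ => ?_
  rcases signRep_eq_or_eq_neg (S := S) (e a) with h | h <;> simp only [h, hf]

end SignRep

variable (ψ : W₀ →* Multiplicative (AddAut X))

lemma act_apply (v : W₀) (α : X →+ ℤ) (x : X) :
    act ψ v α x = α (Multiplicative.toAdd (ψ v⁻¹) x) := rfl

lemma act_neg (v : W₀) (α : X →+ ℤ) : act ψ v (-α) = -act ψ v α := rfl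

lemma act_one (α : X →+ ℤ) : act ψ 1 α = α := by
  ext x
  simp [act_apply]

lemma act_act (v v' : W₀) (α : X →+ ℤ) : act ψ v (act ψ v' α) = act ψ (v * v') α := by
  ext x
  simp only [act_apply, mul_inv_rev, map_mul]
  rfl

def actEquiv (v : W₀) : (X →+ ℤ) ≃ (X →+ ℤ) where
  toFun := act ψ v
  invFun := act ψ v⁻¹
  left_inv α := by rw [act_act, inv_mul_cancel, act_one]
  right_inv α := by rw [act_act, mul_inv_cancel, act_one]

lemma sum_abs_act_eq (Pos : Finset (X →+ ℤ))
    (hperm : ∀ (u : W₀), ∀ α ∈ Pos, act ψ u α ∈ Pos ∨ ∃ β ∈ Pos, act ψ u α = -β)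
    (hdisj : ∀ α ∈ Pos, -α ∉ Pos) (v : W₀) (x : X) :
    ∑ α ∈ Pos, |act ψ v α x| = ∑ α ∈ Pos, |α x| := by
  have neg_mem_of_perm : ∀ u, ∀ α ∈ Pos, act ψ u α ∈ Pos ∨ -act ψ u α ∈ Pos := fun u α hα =>
    (hperm u α hα).imp_right fun ⟨β, hβ, h⟩ => by rwa [h, neg_neg]
  exact sum_comp_equiv_of_mem_or_neg_mem hdisj (actEquiv ψ v) (act_neg ψ v)
    (neg_mem_of_perm v) (neg_mem_of_perm v⁻¹) (fun α => |α x|) fun α => by simp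

lemma sum_apply_eq_sum_abs_of_dominant (Pos : Finset (X →+ ℤ))
    (hperm : ∀ (u : W₀), ∀ α ∈ Pos, act ψ u α ∈ Pos ∨ ∃ β ∈ Pos, act ψ u α = -β)
    (hdisj : ∀ α ∈ Pos, -α ∉ Pos) (u : W₀) (lam : X)
    (hdom : ∀ α ∈ Pos, 0 ≤ α (Multiplicative.toAdd (ψ u) lam)) :
    ∑ α ∈ Pos, α (Multiplicative.toAdd (ψ u) lam) = ∑ α ∈ Pos, |α lam| := by
  rw [← sum_abs_act_eq ψ Pos hperm hdisj u⁻¹ lam]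
  refine Finset.sum_congr rfl fun α hα => ?_
  rw [act_apply, inv_inv, abs_of_nonneg (hdom α hα)]

lemma length_translation {φ : W₀ →* MulAut (Multiplicative X)} (Pos : Finset (X →+ ℤ))
    (ℓ : (Multiplicative X ⋊[φ] W₀) → ℕ)
    (hlen : ∀ (lam : X) (u : W₀), (ℓ (inl (Multiplicative.ofAdd lam) * inr u) : ℤ) =
      ∑ α ∈ Pos, if act ψ u⁻¹ α ∈ Pos then |α lam| else |α lam - 1|)
    (lam : X) :
    (ℓ (inl (Multiplicative.ofAdd lam)) : ℤ) = ∑ α ∈ Pos, |α lam| := by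
  have h := hlen lam 1
  rw [map_one, mul_one, inv_one] at h
  rw [h]
  exact Finset.sum_congr rfl fun α hα => by rw [act_one, if_pos hα]

theorem sigma_straight_length_eq_newton_pairing_general
    (X : Type) [AddCommGroup X] (W₀ : Type) [Group W₀]
    -- the (additive) action of `W₀` on the translation lattice `X`
    (ψ : W₀ →* Multiplicative (AddAut X))
    -- the same action, multiplicatively, defining `W̃ = X ⋊ W₀`
    (φ : W₀ →* MulAut (Multiplicative X))
    -- the positive roots, as linear characters on the cocharacter lattice
    (Pos : Finset (X →+ ℤ))
    -- `W₀` permutes the roots `Pos ∪ (−Pos)` …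
    (hperm : ∀ (u : W₀), ∀ α ∈ Pos,
      act ψ u α ∈ Pos ∨ ∃ β ∈ Pos, act ψ u α = -β)
    -- … and `Pos ∩ (−Pos) = ∅`
    (hdisj : ∀ α ∈ Pos, -α ∉ Pos)
    -- the length function of `W̃`, pinned down by the standard length formula
    (ℓ : (Multiplicative X ⋊[φ] W₀) → ℕ)
    (hlen : ∀ (lam : X) (u : W₀),
      (ℓ (inl (Multiplicative.ofAdd lam) * inr u) : ℤ) =
        ∑ α ∈ Pos,
          if act ψ u⁻¹ α ∈ Pos then |α lam| else |α lam - 1|)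
    -- a length-preserving automorphism `σ` of finite order
    (σ : MulAut (Multiplicative X ⋊[φ] W₀))
    -- a `σ`-straight element `w`
    (w : Multiplicative X ⋊[φ] W₀)
    (hstraight : ∀ m : ℕ, 1 ≤ m → ℓ (twistedProd σ w m) = m * ℓ w)
    -- the Newton point: `σⁿ = 1`, `w σ(w) ⋯ σ^{n-1}(w) = t^λ`, and `u·λ` is dominant,
    -- so that `ν(w) = (1/n)·(u·λ)`
    (n : ℕ) (hn : 0 < n)
    (lam : X)
    (hprod : twistedProd σ w n = inl (Multiplicative.ofAdd lam))
    (u : W₀) (hdom : ∀ α ∈ Pos, 0 ≤ α (Multiplicative.toAdd (ψ u) lam)) :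
    -- `ℓ(w) = ⟨ν(w), 2ρ⟩`, with denominators cleared
    (n : ℤ) * (ℓ w : ℤ) = ∑ α ∈ Pos, α (Multiplicative.toAdd (ψ u) lam) := by
  have hℓ_translation : ℓ (inl (Multiplicative.ofAdd lam)) = n * ℓ w := by
    rw [← hprod]
    exact hstraight n hn
  rw [sum_apply_eq_sum_abs_of_dominant ψ Pos hperm hdisj u lam hdom,
    ← length_translation ψ Pos ℓ hlen lam, hℓ_translation, Nat.cast_mul]

theorem sigma_straight_length_eq_newton_pairing
    (X : Type) [AddCommGroup X] (W₀ : Type) [Group W₀] [Finite W₀]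
    -- the (additive) action of `W₀` on the translation lattice `X`
    (ψ : W₀ →* Multiplicative (AddAut X))
    -- the same action, multiplicatively, defining `W̃ = X ⋊ W₀`
    (φ : W₀ →* MulAut (Multiplicative X))
    (hψφ : ∀ (u : W₀) (x : X),
      φ u (Multiplicative.ofAdd x) = Multiplicative.ofAdd (Multiplicative.toAdd (ψ u) x))
    -- the positive roots, as linear characters on the cocharacter lattice
    (Pos : Finset (X →+ ℤ))
    -- `W₀` permutes the roots `Pos ∪ (−Pos)` …
    (hperm : ∀ (u : W₀), ∀ α ∈ Pos,
      act ψ u α ∈ Pos ∨ ∃ β ∈ Pos, act ψ u α = -β)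
    -- … and `Pos ∩ (−Pos) = ∅`
    (hdisj : ∀ α ∈ Pos, -α ∉ Pos)
    -- the length function of `W̃`, pinned down by the standard length formula
    (ℓ : (Multiplicative X ⋊[φ] W₀) → ℕ)
    (hlen : ∀ (lam : X) (u : W₀),
      (ℓ (inl (Multiplicative.ofAdd lam) * inr u) : ℤ) =
        ∑ α ∈ Pos,
          if act ψ u⁻¹ α ∈ Pos then |α lam| else |α lam - 1|)
    -- a length-preserving automorphism `σ` of finite order
    (σ : MulAut (Multiplicative X ⋊[φ] W₀))
    (hσfin : ∃ k, 0 < k ∧ σ ^ k = 1)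
    (hσℓ : ∀ x, ℓ (σ x) = ℓ x)
    -- a `σ`-straight element `w`
    (w : Multiplicative X ⋊[φ] W₀)
    (hstraight : ∀ m : ℕ, 1 ≤ m → ℓ (twistedProd σ w m) = m * ℓ w)
    -- the Newton point: `σⁿ = 1`, `w σ(w) ⋯ σ^{n-1}(w) = t^λ`, and `u·λ` is dominant,
    -- so that `ν(w) = (1/n)·(u·λ)`
    (n : ℕ) (hn : 0 < n) (hσn : σ ^ n = 1)
    (lam : X)
    (hprod : twistedProd σ w n = inl (Multiplicative.ofAdd lam))
    (u : W₀) (hdom : ∀ α ∈ Pos, 0 ≤ α (Multiplicative.toAdd (ψ u) lam)) :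
    -- `ℓ(w) = ⟨ν(w), 2ρ⟩`, with denominators cleared
    (n : ℤ) * (ℓ w : ℤ) = ∑ α ∈ Pos, α (Multiplicative.toAdd (ψ u) lam) :=
  sigma_straight_length_eq_newton_pairing_general X W₀ ψ φ Pos hperm hdisj ℓ hlen σ w hstraight n hn
    lam hprod u hdom

end Statement4
end

section
/- Let X be a quasi-compact separated scheme. Then X is quasi-affine if and only if the structure sheaf O_X is an ample line bundle on X. -/
/-!
Both sides are equivalent to `X` being quasi-affine in Mathlib's sense, i.e. to
`X ⟶ Spec Γ(X, ⊤)` being an open immersion. Then the `X_s` are the preimages of the basic opens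
`D(s)` of `Spec Γ(X, ⊤)`, so they form a basis. Conversely, if they form a basis, the `X_s`
lying inside affine opens are affine and cover `X`, and over each corresponding `D(s)` the map
`X ⟶ Spec Γ(X, ⊤)` is an isomorphism, because `Γ(X_s) = Γ(X)_s` on a qcqs scheme.
-/

namespace Statement7

open AlgebraicGeometry CategoryTheory TopologicalSpace

lemma _root_.TopologicalSpace.Opens.IsBasis.mono {α : Type*} [TopologicalSpace α]
    {B B' : Set (Opens α)} (hB : Opens.IsBasis B) (hBB' : B ⊆ B') : Opens.IsBasis B' :=
  Opens.isBasis_iff_nbhd.mpr fun hxU ↦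
    let ⟨U', hU'B, hxU', hU'U⟩ := Opens.isBasis_iff_nbhd.mp hB hxU
    ⟨U', hBB' hU'B, hxU', hU'U⟩

lemma isAffineOpen_basicOpen_of_le {X : Scheme} {U V : X.Opens} (hU : IsAffineOpen U)
    (hUV : U ≤ V) (s : Γ(X, V)) (hsU : X.basicOpen s ≤ U) : IsAffineOpen (X.basicOpen s) := by
  have hres : X.basicOpen (X.presheaf.map (homOfLE hUV).op s) = X.basicOpen s := by
    rw [Scheme.basicOpen_res, inf_eq_right.mpr hsU]
  exact hres ▸ hU.basicOpen _

lemma isQuasiAffine_iff_isBasis_basicOpen (X : Scheme) [CompactSpace X] :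
    X.IsQuasiAffine ↔ Opens.IsBasis {U : X.Opens | ∃ s : Γ(X, ⊤), U = X.basicOpen s} := by
  refine ⟨fun _ ↦ ?_, fun hB ↦ ?_⟩
  · refine (Scheme.IsQuasiAffine.isBasis_basicOpen X).mono ?_
    rintro _ ⟨s, -, rfl⟩
    exact ⟨s, rfl⟩
  · refine Scheme.IsQuasiAffine.of_forall_exists_mem_basicOpen X fun x ↦ ?_
    obtain ⟨U, hU, hxU, -⟩ := Opens.isBasis_iff_nbhd.mp X.isBasis_affineOpens (Opens.mem_top x)
    obtain ⟨_, ⟨s, rfl⟩, hxs, hsU⟩ := Opens.isBasis_iff_nbhd.mp hB hxU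
    exact ⟨s, isAffineOpen_basicOpen_of_le hU le_top s hsU, hxs⟩

lemma isQuasiAffine_iff_exists_isOpenImmersion (X : Scheme) [CompactSpace X] :
    X.IsQuasiAffine ↔ ∃ (R : CommRingCat) (f : X ⟶ Spec R), IsOpenImmersion f :=
  ⟨fun _ ↦ ⟨_, X.toSpecΓ, inferInstance⟩, fun ⟨_, f, _⟩ ↦ .of_isImmersion f⟩

theorem quasiAffine_iff_structureSheaf_ample_general
    (X : Scheme) [CompactSpace X] :
    (∃ (R : CommRingCat) (f : X ⟶ Spec R), IsOpenImmersion f) ↔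
      Opens.IsBasis {U : X.Opens | ∃ s : Γ(X, ⊤), U = X.basicOpen s} := by
  rw [← isQuasiAffine_iff_exists_isOpenImmersion, isQuasiAffine_iff_isBasis_basicOpen]

theorem quasiAffine_iff_structureSheaf_ample
    (X : Scheme) [CompactSpace X] [X.IsSeparated] :
    (∃ (R : CommRingCat) (f : X ⟶ Spec R), IsOpenImmersion f) ↔
      Opens.IsBasis {U : X.Opens | ∃ s : Γ(X, ⊤), U = X.basicOpen s} :=
  quasiAffine_iff_structureSheaf_ample_general X

end Statement7
end

section
/- Let W̃ be an extended affine Weyl group, W_K a finite standard parabolic subgroup with Weyl group W_K, and Adm({μ}) ⊆ W̃ the admissible set of a dominant cocharacter μ. Define Adm({μ})^K = W_K·Adm({μ})·W_K and {}^K Adm({μ}) = Adm({μ})^K ∩ {}^K W̃. Then the natural surjection {}^K W̃ → W_K\W̃/W_K restricts to a surjection {}^K Adm({μ}) ↠ Adm({μ})_K := W_K\Adm({μ})^K/W_K, and this surjection admits two sections: w ↦ x_w (the minimal-length element of the double coset) and w ↦ {}^K w_K (the maximal-length element of W_K w W_K ∩ {}^K W̃). Both x_w and {}^K w_K lie in {}^K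 Adm({μ}), and x_w ≤ {}^K w_K in the Bruhat order. -/
/-!
Statement 12: Let `W̃` be an extended affine Weyl group (`W̃ = W_a ⋊ Ω` with Bruhat order
and length inherited from the Coxeter group `W_a`), `W_K` a finite standard parabolic
subgroup, and `Adm({μ}) ⊆ W̃` the admissible set of a dominant cocharacter `μ`.  Define
`Adm({μ})^K = W_K·Adm({μ})·W_K` and `{}^K Adm({μ}) = Adm({μ})^K ∩ {}^K W̃`.  Then the
natural surjection `{}^K W̃ → W_K\W̃/W_K` restricts to a surjection
`{}^K Adm({μ}) ↠ Adm({μ})_K := W_K\Adm({μ})^K/W_K`, and this surjection admits two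
sections: `w ↦ x_w` (the minimal-length element of the double coset) and
`w ↦ {}^K w_K` (the maximal-length element of `W_K w W_K ∩ {}^K W̃`).  Both `x_w` and
`{}^K w_K` lie in `{}^K Adm({μ})`, and `x_w ≤ {}^K w_K` in the Bruhat order.

Following Haines–He, the identity `{}^K Adm({μ}) = Adm({μ}) ∩ {}^K W̃` is taken as a
hypothesis characterizing the admissible set `Adm`.
-/

namespace Statement12

open CoxeterSystem SemidirectProduct

variable {B : Type*} {Wa : Type*} [Group Wa] {M : CoxeterMatrix B}
variable {Ω : Type*} [Group Ω]

/-- The Bruhat order on a Coxeter group, via the subword property. -/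
def BruhatLE (cs : CoxeterSystem M Wa) (u w : Wa) : Prop :=
  ∃ lw : List B, cs.wordProd lw = w ∧ lw.length = cs.length w ∧
    ∃ lu : List B, lu.Sublist lw ∧ cs.wordProd lu = u

/-- The Bruhat order on the extended group `W̃ = W_a ⋊ Ω`. -/
def ExtBruhatLE (cs : CoxeterSystem M Wa) {φ : Ω →* MulAut Wa}
    (x y : Wa ⋊[φ] Ω) : Prop :=
  x.right = y.right ∧ BruhatLE cs x.left y.left

/-- The length function on `W̃ = W_a ⋊ Ω`. -/
noncomputable def extLength (cs : CoxeterSystem M Wa) {φ : Ω →* MulAut Wa}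
    (x : Wa ⋊[φ] Ω) : ℕ :=
  cs.length x.left

/-!
If `x` has minimal length in `W_K x W_K'`, write `u x v` as a product of a `K`-word, a reduced
word `μ` of `x` and a `K'`-word, and extract a reduced subword `σ₁ σ₂ σ₃` with the same product.
The middle piece `σ₂ ⊆ μ` multiplies to an element of the same double coset, so minimality forces
`σ₂ = μ`: `x` is a subword of a reduced word of `u x v`. Extracting reduced subwords is the deletion
property, which follows from Tits' permutation representation of `W` on `W × ZMod 2`: the parity
of the number of occurrences of `t` in the left inversion sequence of a word depends only on the
element it represents, and a left descent `s i` occurs exactly once for a suitable word.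
In `W̃ = W_a ⋊ Ω` the right factor `W_K` is twisted by the `Ω`-component, and the twisted group
is again a standard parabolic subgroup because `φ` preserves length.
-/

section ReflectionCocycle

open List
open scoped Classical

variable {W : Type*} [Group W] (cs : CoxeterSystem M W)

local prefix:100 "s" => cs.simple
local prefix:100 "π" => cs.wordProd
local prefix:100 "ℓ" => cs.length
local prefix:100 "lis " => cs.leftInvSeq

theorem _root_.CoxeterSystem.simple_mul_mul_simple_eq_simple_iff (i : B) (t : W) :
    s i * t * s i = s i ↔ t = s i := by
  constructor
  · intro h
    simpa [mul_assoc, cs.simple_mul_simple_cancel_left] using congrArg (s i * · * s i) h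
  · rintro rfl
    rw [cs.simple_mul_simple_self, one_mul]

noncomputable def _root_.CoxeterSystem.reflectionToggle (i : B) : Equiv.Perm (W × ZMod 2) :=
  Function.Involutive.toPerm (fun p => (s i * p.1 * s i, p.2 + if p.1 = s i then 1 else 0)) <| by
    rintro ⟨t, e⟩
    have hconj : s i * (s i * t * s i) * s i = t := by
      simp [mul_assoc, cs.simple_mul_simple_cancel_left]
    by_cases ht : t = s i
    · simp [ht, cs.simple_mul_simple_self, add_assoc, CharTwo.add_self_eq_zero]
    · simp [hconj, ht, cs.simple_mul_mul_simple_eq_simple_iff]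

theorem _root_.CoxeterSystem.reflectionToggle_apply (i : B) (t : W) (e : ZMod 2) :
    cs.reflectionToggle i (t, e) = (s i * t * s i, e + if t = s i then 1 else 0) := rfl

theorem _root_.CoxeterSystem.prod_map_reflectionToggle_reverse_apply (ω : List B) (t : W)
    (e : ZMod 2) :
    (ω.reverse.map cs.reflectionToggle).prod (t, e) =
      ((π ω)⁻¹ * t * π ω, e + (lis ω).count t) := by
  induction ω generalizing t e with
  | nil => simp
  | cons i ω ih =>
    have hcount : (lis (i :: ω)).count t =
        (lis ω).count (s i * t * s i) + if t = s i then 1 else 0 := by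
      have ht : t = MulAut.conj (s i) (s i * t * s i) := by
        simp [mul_assoc, cs.simple_mul_simple_cancel_left, cs.simple_mul_simple_self]
      rw [leftInvSeq, count_cons, ht, count_map_of_injective _ _ (MulAut.conj (s i)).injective,
        ← ht]
      congr 1
      simp only [beq_iff_eq, @eq_comm _ (s i)]
    simp only [reverse_cons, map_append, prod_append, map_singleton, prod_singleton,
      Equiv.Perm.mul_apply, reflectionToggle_apply, ih, hcount, cs.wordProd_cons, mul_inv_rev,
      cs.inv_simple, mul_assoc, Nat.cast_add, Nat.cast_ite, Nat.cast_one, Nat.cast_zero]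
    exact Prod.ext rfl (by ring)

theorem _root_.CoxeterSystem.prod_map_reflectionToggle_reverse_alternatingWord (i j : B) (m : ℕ) :
    ((alternatingWord i j (2 * m)).reverse.map cs.reflectionToggle).prod =
      (cs.reflectionToggle j * cs.reflectionToggle i) ^ m := by
  induction m with
  | zero => simp [alternatingWord]
  | succ m ih =>
    have hodd : ¬ Even (2 * m + 1) := by simp
    rw [show 2 * (m + 1) = 2 * m + 1 + 1 by ring, alternatingWord_succ', if_neg hodd,
      alternatingWord_succ', if_pos (even_two_mul m)]
    simp only [reverse_cons, map_append, prod_append, map_singleton, prod_singleton, ih, pow_succ,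
      mul_assoc]

theorem _root_.CoxeterSystem.leftInvSeq_alternatingWord_eq_map_range (i j : B) (p : ℕ) :
    lis (alternatingWord j i (2 * p)) =
      (range (2 * p)).map fun k => s j * (s i * s j) ^ k := by
  refine ext_getElem (by simp) fun k hk _ => ?_
  rw [getElem_leftInvSeq_alternatingWord _ _ _ _ _ (by simpa using hk), getElem_map,
    getElem_range, prod_alternatingWord_eq_mul_pow]
  have hodd : ¬ Even (2 * k + 1) := by simp
  rw [if_neg hodd, show (2 * k + 1) / 2 = k by omega]

theorem _root_.CoxeterSystem.even_count_leftInvSeq_alternatingWord_two_mul (i j : B) (t : W) :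
    Even ((lis (alternatingWord j i (2 * M i j))).count t) := by
  have hperiodic : ∀ k, s j * (s i * s j) ^ (M i j + k) = s j * (s i * s j) ^ k := by
    intro k
    rw [pow_add, cs.simple_mul_simple_pow, one_mul]
  rw [leftInvSeq_alternatingWord_eq_map_range, two_mul, range_add, map_append, map_map]
  simp only [Function.comp_def, hperiodic, count_append]
  exact ⟨_, rfl⟩

theorem _root_.CoxeterSystem.isLiftable_reflectionToggle :
    M.IsLiftable cs.reflectionToggle := by
  intro i j
  rw [← prod_map_reflectionToggle_reverse_alternatingWord]
  ext1 ⟨t, e⟩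
  have hπ : π (alternatingWord j i (2 * M i j)) = 1 := by
    rw [prod_alternatingWord_eq_mul_pow, if_pos (even_two_mul _), one_mul,
      Nat.mul_div_cancel_left _ two_pos, cs.simple_mul_simple_pow']
  rw [prod_map_reflectionToggle_reverse_apply, hπ,
    (cs.even_count_leftInvSeq_alternatingWord_two_mul i j t).natCast_zmod_two]
  simp

noncomputable def _root_.CoxeterSystem.reflectionRep : W →* Equiv.Perm (W × ZMod 2) :=
  cs.lift ⟨cs.reflectionToggle, cs.isLiftable_reflectionToggle⟩

theorem _root_.CoxeterSystem.reflectionRep_wordProd_inv (ω : List B) :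
    cs.reflectionRep (π ω)⁻¹ = (ω.reverse.map cs.reflectionToggle).prod := by
  rw [← wordProd_reverse, wordProd, map_list_prod, map_map]
  exact congrArg prod (map_congr_left fun i _ => cs.lift_apply_simple _ i)

theorem _root_.CoxeterSystem.count_leftInvSeq_cast_eq_of_wordProd_eq {ω ω' : List B}
    (h : π ω = π ω') (t : W) : ((lis ω).count t : ZMod 2) = (lis ω').count t := by
  simpa only [reflectionRep_wordProd_inv, prod_map_reflectionToggle_reverse_apply, zero_add] using
    congrArg (fun g => (cs.reflectionRep g⁻¹ (t, 0)).2) h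

theorem _root_.CoxeterSystem.simple_mem_leftInvSeq_of_isLeftDescent {ω : List B} {i : B}
    (h : cs.IsLeftDescent (π ω) i) : s i ∈ lis ω := by
  obtain ⟨τ, hτ, hτπ⟩ := cs.exists_isReduced (s i * π ω)
  have hnotMem : s i ∉ lis τ := fun hmem => by
    have := (cs.isLeftInversion_of_mem_leftInvSeq hτ hmem).2
    rw [← hτπ, cs.simple_mul_simple_cancel_left] at this
    exact lt_asymm this h
  have hword : π (i :: τ) = π ω := by
    rw [wordProd_cons, ← hτπ, cs.simple_mul_simple_cancel_left]
  have hcount : (lis (i :: τ)).count (s i) = 1 := by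
    have hconj := count_map_of_injective (lis τ) _ (MulAut.conj (s i)).injective (s i)
    rw [MulAut.conj_apply, cs.inv_simple, cs.simple_mul_simple_cancel_right] at hconj
    rw [leftInvSeq, count_cons_self, hconj, count_eq_zero.mpr hnotMem]
  have hparity := cs.count_leftInvSeq_cast_eq_of_wordProd_eq hword (s i)
  rw [hcount] at hparity
  refine count_pos_iff.mp (Nat.pos_of_ne_zero fun h0 => ?_)
  rw [h0] at hparity
  exact absurd hparity (by decide)

theorem _root_.CoxeterSystem.exists_wordProd_eraseIdx_eq_simple_mul {ω : List B} {i : B}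
    (h : cs.IsLeftDescent (π ω) i) : ∃ k < ω.length, π (ω.eraseIdx k) = s i * π ω := by
  obtain ⟨k, hk, hki⟩ := mem_iff_getElem.mp (cs.simple_mem_leftInvSeq_of_isLeftDescent h)
  refine ⟨k, by simpa using hk, ?_⟩
  rw [← getD_leftInvSeq_mul_wordProd, getD_eq_getElem _ _ hk, hki]

theorem _root_.CoxeterSystem.exists_isReduced_sublist_wordProd_eq (ω : List B) :
    ∃ σ, σ.Sublist ω ∧ cs.IsReduced σ ∧ π σ = π ω := by
  induction ω with
  | nil => exact ⟨[], Sublist.slnil, by simp [CoxeterSystem.IsReduced], rfl⟩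
  | cons i ω ih =>
    obtain ⟨σ, hsub, hred, hπ⟩ := ih
    rcases cs.length_simple_mul (π σ) i with hup | hdown
    · refine ⟨i :: σ, hsub.cons_cons i, ?_, by rw [wordProd_cons, wordProd_cons, hπ]⟩
      rw [CoxeterSystem.IsReduced, wordProd_cons, hup, hred, length_cons]
    · obtain ⟨k, hk, hπk⟩ :=
        cs.exists_wordProd_eraseIdx_eq_simple_mul (show cs.IsLeftDescent (π σ) i by
          rw [IsLeftDescent]; omega)
      refine ⟨σ.eraseIdx k, (eraseIdx_sublist σ k).trans (hsub.cons i), ?_, ?_⟩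
      · have := length_eraseIdx_add_one hk
        have := hred.eq
        rw [CoxeterSystem.IsReduced, hπk]
        omega
      · rw [hπk, hπ, wordProd_cons]

end ReflectionCocycle

section Parabolic

open List

variable {W : Type*} [Group W] (cs : CoxeterSystem M W)

local prefix:100 "π" => cs.wordProd
local prefix:100 "ℓ" => cs.length

theorem _root_.CoxeterSystem.mem_closure_simple_image_iff {K : Set B} {u : W} :
    u ∈ Subgroup.closure (cs.simple '' K) ↔ ∃ ω : List B, (∀ b ∈ ω, b ∈ K) ∧ π ω = u := by
  constructor
  · intro hu
    induction hu using Subgroup.closure_induction_left with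
    | one => exact ⟨[], by simp, cs.wordProd_nil⟩
    | mul_left x hx y _ ih =>
      obtain ⟨b, hb, rfl⟩ := hx
      obtain ⟨ω, hω, rfl⟩ := ih
      exact ⟨b :: ω, forall_mem_cons.mpr ⟨hb, hω⟩, (cs.wordProd_cons b ω).symm⟩
    | inv_mul_cancel x hx y _ ih =>
      obtain ⟨b, hb, rfl⟩ := hx
      obtain ⟨ω, hω, rfl⟩ := ih
      exact ⟨b :: ω, forall_mem_cons.mpr ⟨hb, hω⟩, by rw [cs.inv_simple, cs.wordProd_cons]⟩
  · rintro ⟨ω, hω, rfl⟩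
    exact Subgroup.list_prod_mem _ <| forall_mem_map.mpr fun b hb =>
      Subgroup.subset_closure ⟨b, hω b hb, rfl⟩

theorem bruhatLE_mul_mul_of_forall_length_le {K K' : Set B} {m : W}
    (hmin : ∀ p ∈ Subgroup.closure (cs.simple '' K), ∀ q ∈ Subgroup.closure (cs.simple '' K'),
      ℓ m ≤ ℓ (p * m * q))
    {u v : W} (hu : u ∈ Subgroup.closure (cs.simple '' K))
    (hv : v ∈ Subgroup.closure (cs.simple '' K')) :
    BruhatLE cs m (u * m * v) := by
  obtain ⟨α, hα, rfl⟩ := cs.mem_closure_simple_image_iff.mp hu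
  obtain ⟨β, hβ, rfl⟩ := cs.mem_closure_simple_image_iff.mp hv
  obtain ⟨μ, hμ, rfl⟩ := cs.exists_isReduced m
  obtain ⟨σ, hsub, hred, hσ⟩ := cs.exists_isReduced_sublist_wordProd_eq (α ++ μ ++ β)
  obtain ⟨σ₁₂, σ₃, rfl, h₁₂, h₃⟩ := sublist_append_iff.mp hsub
  obtain ⟨σ₁, σ₂, rfl, h₁, h₂⟩ := sublist_append_iff.mp h₁₂
  simp only [wordProd_append] at hσ
  have hmemK : ∀ γ : List B, γ.Sublist α → π γ ∈ Subgroup.closure (cs.simple '' K) :=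
    fun γ hγ => cs.mem_closure_simple_image_iff.mpr ⟨γ, fun b hb => hα b (hγ.subset hb), rfl⟩
  have hmemK' : ∀ γ : List B, γ.Sublist β → π γ ∈ Subgroup.closure (cs.simple '' K') :=
    fun γ hγ => cs.mem_closure_simple_image_iff.mpr ⟨γ, fun b hb => hβ b (hγ.subset hb), rfl⟩
  have hσ₂ : σ₂ = μ := by
    refine h₂.eq_of_length (le_antisymm h₂.length_le ?_)
    have hp := mul_mem (inv_mem (hmemK σ₁ h₁)) (hmemK α (Sublist.refl α))
    have hq := mul_mem (hmemK' β (Sublist.refl β)) (inv_mem (hmemK' σ₃ h₃))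
    calc μ.length = ℓ (π μ) := hμ.symm
      _ ≤ ℓ ((π σ₁)⁻¹ * π α * π μ * (π β * (π σ₃)⁻¹)) := hmin _ hp _ hq
      _ = ℓ (π σ₂) := by
        rw [show (π σ₁)⁻¹ * π α * π μ * (π β * (π σ₃)⁻¹) =
          (π σ₁)⁻¹ * (π α * π μ * π β) * (π σ₃)⁻¹ by group, ← hσ]
        group
      _ ≤ σ₂.length := cs.length_wordProd_le σ₂
  subst σ₂
  refine ⟨σ₁ ++ μ ++ σ₃, by rw [wordProd_append, wordProd_append, hσ], ?_, μ,
    (sublist_append_right σ₁ μ).trans (sublist_append_left _ σ₃), rfl⟩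
  rw [← hred, wordProd_append, wordProd_append, hσ]

end Parabolic

section ExtendedAffineWeylGroup

open SemidirectProduct

theorem _root_.CoxeterSystem.exists_map_closure_simple_image_eq {W : Type*} [Group W]
    (cs : CoxeterSystem M W) (f : W →* W) (hf : ∀ w, cs.length (f w) = cs.length w) (K : Set B) :
    ∃ K' : Set B,
      (Subgroup.closure (cs.simple '' K)).map f = Subgroup.closure (cs.simple '' K') := by
  refine ⟨cs.simple ⁻¹' (f '' (cs.simple '' K)), ?_⟩
  rw [MonoidHom.map_closure, Set.image_preimage_eq_of_subset]
  rintro _ ⟨_, ⟨k, -, rfl⟩, rfl⟩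
  obtain ⟨b, hb⟩ :=
    (cs.length_eq_one_iff (w := f (cs.simple k))).mp (by rw [hf, cs.length_simple])
  exact ⟨b, hb.symm⟩

variable {φ : Ω →* MulAut Wa}

theorem inl_mul_mul_inl_left (p q : Wa) (x : Wa ⋊[φ] Ω) :
    (inl p * x * inl q).left = p * x.left * φ x.right q := by
  simp [mul_assoc]

theorem inl_mul_mul_inl_right (p q : Wa) (x : Wa ⋊[φ] Ω) :
    (inl p * x * inl q).right = x.right := by
  simp

theorem extBruhatLE_inl_mul_mul_inl (cs : CoxeterSystem M Wa)
    (hφ : ∀ (a : Ω) (v : Wa), cs.length (φ a v) = cs.length v) {K : Set B} {x : Wa ⋊[φ] Ω}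
    (hx : ∀ p ∈ Subgroup.closure (cs.simple '' K), ∀ q ∈ Subgroup.closure (cs.simple '' K),
      extLength cs x ≤ extLength cs (inl p * x * inl q))
    {p q : Wa} (hp : p ∈ Subgroup.closure (cs.simple '' K))
    (hq : q ∈ Subgroup.closure (cs.simple '' K)) :
    ExtBruhatLE cs x (inl p * x * inl q) := by
  obtain ⟨K', hK'⟩ := cs.exists_map_closure_simple_image_eq (φ x.right).toMonoidHom (hφ x.right) K
  refine ⟨(inl_mul_mul_inl_right p q x).symm, ?_⟩
  rw [inl_mul_mul_inl_left]
  refine bruhatLE_mul_mul_of_forall_length_le cs (fun p' hp' r hr => ?_) hp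
    (hK' ▸ Subgroup.mem_map_of_mem _ hq)
  obtain ⟨q', hq', rfl⟩ := hK' ▸ hr
  simpa only [extLength, inl_mul_mul_inl_left, MulEquiv.coe_toMonoidHom] using hx p' hp' q' hq'

end ExtendedAffineWeylGroup

theorem forall_le_mul_of_forall_le_doubleCoset {G : Type*} [Group G] {H : Subgroup G}
    {f : G → ℕ} {a x : G} (hx : ∃ u ∈ H, ∃ v ∈ H, x = u * a * v)
    (hmin : ∀ y, (∃ u ∈ H, ∃ v ∈ H, y = u * a * v) → f x ≤ f y) :
    ∀ w ∈ H, f x ≤ f (w * x) := by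
  obtain ⟨u, hu, v, hv, rfl⟩ := hx
  exact fun w hw => hmin _ ⟨w * u, mul_mem hw hu, v, hv, by group⟩

theorem KAdm_sections_general
    (cs : CoxeterSystem M Wa) (φ : Ω →* MulAut Wa)
    (hφ : ∀ (a : Ω) (v : Wa), cs.length (φ a v) = cs.length v)
    (K : Set B) (WK : Subgroup Wa)
    (hWK : WK = Subgroup.closure (cs.simple '' K))
    -- the image of `W_K` in `W̃`
    (WKt : Subgroup (Wa ⋊[φ] Ω)) (hWKt : WKt = WK.map inl)
    -- the admissible set of `{μ}`
    (Adm : Set (Wa ⋊[φ] Ω))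
    -- `{}^K W̃`: minimal-length representatives of `W_K \ W̃`
    (minRep : Set (Wa ⋊[φ] Ω))
    (hminRep : minRep =
      {x | ∀ v ∈ WKt, extLength cs x ≤ extLength cs (v * x)})
    -- `Adm^K = W_K · Adm · W_K`
    (AdmK : Set (Wa ⋊[φ] Ω))
    (hAdmK : AdmK = {y | ∃ u ∈ WKt, ∃ a ∈ Adm, ∃ v ∈ WKt, y = u * a * v})
    -- `{}^K Adm = Adm^K ∩ {}^K W̃`
    (KAdm : Set (Wa ⋊[φ] Ω)) (hKAdm : KAdm = AdmK ∩ minRep) :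
    -- (1) every double coset of `Adm^K` meets `{}^K Adm`, i.e. the natural map
    -- `{}^K Adm → Adm_K = W_K \ Adm^K / W_K` is surjective
    (∀ a ∈ AdmK, ∃ y ∈ KAdm, ∃ u ∈ WKt, ∃ v ∈ WKt, a = u * y * v) ∧
    -- (2) the minimal-length element `x_w` of a double coset of `Adm^K` lies in
    -- `{}^K Adm` (first section)
    (∀ a ∈ AdmK, ∀ x,
      ((∃ u ∈ WKt, ∃ v ∈ WKt, x = u * a * v) ∧
        ∀ y, (∃ u ∈ WKt, ∃ v ∈ WKt, y = u * a * v) →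
          extLength cs x ≤ extLength cs y) →
      x ∈ KAdm) ∧
    -- (3) the maximal-length element `{}^K w_K` of `W_K w W_K ∩ {}^K W̃` lies in
    -- `{}^K Adm` (second section)
    (∀ a ∈ AdmK, ∀ m,
      ((∃ u ∈ WKt, ∃ v ∈ WKt, m = u * a * v) ∧ m ∈ minRep ∧
        ∀ y, (∃ u ∈ WKt, ∃ v ∈ WKt, y = u * a * v) → y ∈ minRep →
          extLength cs y ≤ extLength cs m) →
      m ∈ KAdm) ∧
    -- (4) `x_w ≤ {}^K w_K` in the Bruhat order
    (∀ a ∈ AdmK, ∀ x m,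
      ((∃ u ∈ WKt, ∃ v ∈ WKt, x = u * a * v) ∧
        ∀ y, (∃ u ∈ WKt, ∃ v ∈ WKt, y = u * a * v) →
          extLength cs x ≤ extLength cs y) →
      ((∃ u ∈ WKt, ∃ v ∈ WKt, m = u * a * v) ∧ m ∈ minRep ∧
        ∀ y, (∃ u ∈ WKt, ∃ v ∈ WKt, y = u * a * v) → y ∈ minRep →
          extLength cs y ≤ extLength cs m) →
      ExtBruhatLE cs x m) := by
  have hAdmK_mul : ∀ a ∈ AdmK, ∀ y, (∃ u ∈ WKt, ∃ v ∈ WKt, y = u * a * v) → y ∈ AdmK := by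
    rintro _ ha _ ⟨u, hu, v, hv, rfl⟩
    rw [hAdmK] at ha ⊢
    obtain ⟨u₀, hu₀, a₀, ha₀, v₀, hv₀, rfl⟩ := ha
    exact ⟨u * u₀, mul_mem hu hu₀, a₀, ha₀, v₀ * v, mul_mem hv₀ hv, by group⟩
  have hminimal_mem : ∀ a ∈ AdmK, ∀ x, (∃ u ∈ WKt, ∃ v ∈ WKt, x = u * a * v) →
      (∀ y, (∃ u ∈ WKt, ∃ v ∈ WKt, y = u * a * v) → extLength cs x ≤ extLength cs y) →
      x ∈ KAdm := fun a ha x hx hmin => by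
    rw [hKAdm, hminRep]
    exact ⟨hAdmK_mul a ha x hx, forall_le_mul_of_forall_le_doubleCoset hx hmin⟩
  refine ⟨fun a ha => ?_, fun a ha x hx => hminimal_mem a ha x hx.1 hx.2,
    fun a ha m hm => hKAdm ▸ ⟨hAdmK_mul a ha m hm.1, hm.2.1⟩, ?_⟩
  · let D := {y | ∃ u ∈ WKt, ∃ v ∈ WKt, y = u * a * v}
    have haD : a ∈ D := ⟨1, one_mem _, 1, one_mem _, by group⟩
    obtain ⟨u, hu, v, hv, hx⟩ := Function.argminOn_mem (extLength cs) D ⟨a, haD⟩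
    refine ⟨_, hminimal_mem a ha _ ⟨u, hu, v, hv, hx⟩ fun y hy =>
      Function.argminOn_le (extLength cs) D hy, u⁻¹, inv_mem hu, v⁻¹, inv_mem hv, by rw [hx]; group⟩
  · subst hWKt hWK
    rintro a - _ _ ⟨⟨_, ⟨p, hp, rfl⟩, _, ⟨q, hq, rfl⟩, rfl⟩, hxmin⟩
      ⟨⟨_, ⟨p', hp', rfl⟩, _, ⟨q', hq', rfl⟩, rfl⟩, -⟩
    rw [show inl p' * a * inl q' = inl (p' * p⁻¹) * (inl p * a * inl q) * inl (q⁻¹ * q') by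
      simp only [map_mul, map_inv]; group]
    refine extBruhatLE_inl_mul_mul_inl cs hφ (fun p₀ hp₀ q₀ hq₀ => hxmin _
      ⟨inl (p₀ * p), ⟨_, mul_mem hp₀ hp, rfl⟩, inl (q * q₀), ⟨_, mul_mem hq hq₀, rfl⟩, ?_⟩)
      (mul_mem hp' (inv_mem hp)) (mul_mem (inv_mem hq) hq')
    simp only [map_mul]
    group

theorem KAdm_sections
    (cs : CoxeterSystem M Wa) (φ : Ω →* MulAut Wa)
    (hφ : ∀ (a : Ω) (v : Wa), cs.length (φ a v) = cs.length v)
    (K : Set B) (WK : Subgroup Wa)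
    (hWK : WK = Subgroup.closure (cs.simple '' K))
    (hfin : (WK : Set Wa).Finite)
    -- the image of `W_K` in `W̃`
    (WKt : Subgroup (Wa ⋊[φ] Ω)) (hWKt : WKt = WK.map inl)
    -- the admissible set of `{μ}`
    (Adm : Set (Wa ⋊[φ] Ω))
    -- `{}^K W̃`: minimal-length representatives of `W_K \ W̃`
    (minRep : Set (Wa ⋊[φ] Ω))
    (hminRep : minRep =
      {x | ∀ v ∈ WKt, extLength cs x ≤ extLength cs (v * x)})
    -- `Adm^K = W_K · Adm · W_K`
    (AdmK : Set (Wa ⋊[φ] Ω))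
    (hAdmK : AdmK = {y | ∃ u ∈ WKt, ∃ a ∈ Adm, ∃ v ∈ WKt, y = u * a * v})
    -- `{}^K Adm = Adm^K ∩ {}^K W̃`
    (KAdm : Set (Wa ⋊[φ] Ω)) (hKAdm : KAdm = AdmK ∩ minRep)
    -- the theorem of He and Haines–He: `{}^K Adm = Adm ∩ {}^K W̃`
    (hHH : AdmK ∩ minRep = Adm ∩ minRep) :
    -- (1) every double coset of `Adm^K` meets `{}^K Adm`, i.e. the natural map
    -- `{}^K Adm → Adm_K = W_K \ Adm^K / W_K` is surjective
    (∀ a ∈ AdmK, ∃ y ∈ KAdm, ∃ u ∈ WKt, ∃ v ∈ WKt, a = u * y * v) ∧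
    -- (2) the minimal-length element `x_w` of a double coset of `Adm^K` lies in
    -- `{}^K Adm` (first section)
    (∀ a ∈ AdmK, ∀ x,
      ((∃ u ∈ WKt, ∃ v ∈ WKt, x = u * a * v) ∧
        ∀ y, (∃ u ∈ WKt, ∃ v ∈ WKt, y = u * a * v) →
          extLength cs x ≤ extLength cs y) →
      x ∈ KAdm) ∧
    -- (3) the maximal-length element `{}^K w_K` of `W_K w W_K ∩ {}^K W̃` lies in
    -- `{}^K Adm` (second section)
    (∀ a ∈ AdmK, ∀ m,
      ((∃ u ∈ WKt, ∃ v ∈ WKt, m = u * a * v) ∧ m ∈ minRep ∧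
        ∀ y, (∃ u ∈ WKt, ∃ v ∈ WKt, y = u * a * v) → y ∈ minRep →
          extLength cs y ≤ extLength cs m) →
      m ∈ KAdm) ∧
    -- (4) `x_w ≤ {}^K w_K` in the Bruhat order
    (∀ a ∈ AdmK, ∀ x m,
      ((∃ u ∈ WKt, ∃ v ∈ WKt, x = u * a * v) ∧
        ∀ y, (∃ u ∈ WKt, ∃ v ∈ WKt, y = u * a * v) →
          extLength cs x ≤ extLength cs y) →
      ((∃ u ∈ WKt, ∃ v ∈ WKt, m = u * a * v) ∧ m ∈ minRep ∧
        ∀ y, (∃ u ∈ WKt, ∃ v ∈ WKt, y = u * a * v) → y ∈ minRep →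
          extLength cs y ≤ extLength cs m) →
      ExtBruhatLE cs x m) :=
  KAdm_sections_general cs φ hφ K WK hWK WKt hWKt Adm minRep hminRep AdmK hAdmK KAdm hKAdm

end Statement12
end
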